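/- arXiv:2511.03003 — 5 statements merged into one kernel-verified Lean document; each statement's English description precedes it below -/
import Mathlib

section
/- If S is a finite commutative semigroup whose extended commuting graph contains a *-left path, then the *-knit degree of S equals 1. -/
open SimpleGraph

/-- The center of a magma/semigroup: elements commuting with everything. -/
def sgCenter (S : Type*) [Mul S] : Set S := {x | ∀ y, x * y = y * x}

/-- The commuting graph of a semigroup: vertices are non-central elements,
distinct vertices adjacent iff they commute. -/
def commGraph (S : Type*) [Mul S] : SimpleGraph {x : S // x ∉ sgCenter S} where
  Adj x y := x ≠ y ∧ (x : S) * y = (y : S) * x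
  symm := ⟨fun x y ⟨h, h'⟩ => ⟨h.symm, h'.symm⟩⟩
  loopless := ⟨fun x ⟨h, _⟩ => h rfl⟩

/-- The extended commuting graph of a semigroup: vertices are all elements,
distinct vertices adjacent iff they commute. -/
def extCommGraph (S : Type*) [Mul S] : SimpleGraph S where
  Adj x y := x ≠ y ∧ x * y = y * x
  symm := ⟨fun x y ⟨h, h'⟩ => ⟨h.symm, h'.symm⟩⟩
  loopless := ⟨fun x ⟨h, _⟩ => h rfl⟩

/-- The graph join of two graphs on disjoint vertex sets. -/
def graphJoin {V W : Type*} (G : SimpleGraph V) (H : SimpleGraph W) :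
    SimpleGraph (V ⊕ W) where
  Adj x y := match x, y with
    | .inl a, .inl b => G.Adj a b
    | .inr a, .inr b => H.Adj a b
    | .inl _, .inr _ => True
    | .inr _, .inl _ => True
  symm := by constructor; rintro (a|a) (b|b) h <;> simp_all [SimpleGraph.Adj.symm]
  loopless := by constructor; rintro (a|a) h; exacts [G.loopless.irrefl a h, H.loopless.irrefl a h]

/-- The graph join of a family of graphs on disjoint vertex sets. -/
def graphJoinFam {ι : Type*} {V : ι → Type*} (G : ∀ i, SimpleGraph (V i)) :
    SimpleGraph (Σ i, V i) where
  Adj x y := x.1 ≠ y.1 ∨ ∃ a b : V x.1, (G x.1).Adj a b ∧ x = ⟨x.1, a⟩ ∧ y = ⟨x.1, b⟩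
  symm := by
    constructor
    rintro ⟨i, a⟩ ⟨j, b⟩ (h | ⟨a', b', hadj, h1, h2⟩)
    · exact Or.inl h.symm
    · cases h1; cases h2
      exact Or.inr ⟨b', a, hadj.symm, rfl, rfl⟩
  loopless := by
    constructor
    rintro ⟨i, a⟩ (h | ⟨a', b', hadj, h1, h2⟩)
    · exact h rfl
    · cases h1
      cases h2
      exact (G i).loopless.irrefl _ hadj

/-- The strong product of two simple graphs. -/
def strongProd {V W : Type*} (G : SimpleGraph V) (H : SimpleGraph W) :
    SimpleGraph (V × W) where
  Adj x y := x ≠ y ∧ (x.1 = y.1 ∨ G.Adj x.1 y.1) ∧ (x.2 = y.2 ∨ H.Adj x.2 y.2)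
  symm := ⟨fun x y ⟨h, h1, h2⟩ =>
    ⟨h.symm, h1.imp Eq.symm (fun h => G.symm.symm _ _ h), h2.imp Eq.symm (fun h => H.symm.symm _ _ h)⟩⟩
  loopless := ⟨fun x ⟨h, _⟩ => h rfl⟩

/-- The strong product of a family of simple graphs. -/
def strongProdFam {ι : Type*} {V : ι → Type*} (G : ∀ i, SimpleGraph (V i)) :
    SimpleGraph (∀ i, V i) where
  Adj x y := x ≠ y ∧ ∀ i, x i = y i ∨ (G i).Adj (x i) (y i)
  symm := ⟨fun x y ⟨h, h'⟩ => ⟨h.symm, fun i => (h' i).imp Eq.symm (fun h => (G i).symm.symm _ _ h)⟩⟩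
  loopless := ⟨fun x ⟨h, _⟩ => h rfl⟩

/-- `p` is a left path in the commuting graph of `S`. -/
def IsLeftPath {S : Type*} [Mul S] {u v : {x : S // x ∉ sgCenter S}}
    (p : (commGraph S).Walk u v) : Prop :=
  p.IsPath ∧ u ≠ v ∧ ∀ w ∈ p.support, (u : S) * (w : S) = (v : S) * (w : S)

/-- The commuting graph of `S` contains a left path. -/
def HasLeftPath (S : Type*) [Mul S] : Prop :=
  ∃ (u v : {x : S // x ∉ sgCenter S}) (p : (commGraph S).Walk u v), IsLeftPath p

/-- The knit degree of `S`: the length of a shortest left path in its commuting graph. -/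
noncomputable def knitDegree (S : Type*) [Mul S] : ℕ :=
  sInf {m | ∃ (u v : {x : S // x ∉ sgCenter S}) (p : (commGraph S).Walk u v),
    IsLeftPath p ∧ p.length = m}

/-- `p` is a *-left path in the extended commuting graph of `S`. -/
def IsStarLeftPath {S : Type*} [Mul S] {u v : S}
    (p : (extCommGraph S).Walk u v) : Prop :=
  p.IsPath ∧ u ≠ v ∧ ∀ w ∈ p.support, u * w = v * w

/-- The extended commuting graph of `S` contains a *-left path. -/
def HasStarLeftPath (S : Type*) [Mul S] : Prop :=
  ∃ (u v : S) (p : (extCommGraph S).Walk u v), IsStarLeftPath p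

/-- The *-knit degree of `S`. -/
noncomputable def starKnitDegree (S : Type*) [Mul S] : ℕ :=
  sInf {m | ∃ (u v : S) (p : (extCommGraph S).Walk u v), IsStarLeftPath p ∧ p.length = m}

/-- The zero-union of a family of semigroups: their disjoint union plus a new zero. -/
def ZeroUnion {n : ℕ} (S : Fin n → Type*) : Type _ := Option (Σ i, S i)

instance {n : ℕ} (S : Fin n → Type*) [∀ i, Mul (S i)] : Mul (ZeroUnion S) where
  mul x y := match x, y with
    | some ⟨i, a⟩, some ⟨j, b⟩ =>
      if h : j = i then some ⟨i, a * (h ▸ b)⟩ else none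
    | _, _ => none

/-!
In a commutative semigroup any two distinct elements are adjacent in the extended commuting graph,
and the *-left conditions at the two endpoints of a *-left path from `u` to `v` are exactly what
makes the single edge `u — v` a *-left path. Length `0` is impossible since `u ≠ v`.
-/

theorem IsStarLeftPath.length_ne_zero {S : Type*} [Mul S] {u v : S}
    {p : (extCommGraph S).Walk u v} (hp : IsStarLeftPath p) : p.length ≠ 0 :=
  fun h => hp.2.1 (p.eq_of_length_eq_zero h)

theorem isStarLeftPath_toWalk {S : Type*} [Mul S] {u v : S} (huv : (extCommGraph S).Adj u v)
    (hu : u * u = v * u) (hv : u * v = v * v) : IsStarLeftPath huv.toWalk := by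
  refine ⟨huv.isPath_toWalk, huv.1, fun w hw => ?_⟩
  simp only [Adj.toWalk, Walk.support_cons, Walk.support_nil, List.mem_cons,
    List.not_mem_nil, or_false] at hw
  rcases hw with rfl | rfl
  exacts [hu, hv]

theorem IsStarLeftPath.exists_isStarLeftPath_toWalk_of_comm {S : Type*} [Mul S]
    (hc : ∀ x y : S, x * y = y * x) {u v : S} {p : (extCommGraph S).Walk u v} (hp : IsStarLeftPath p) :
    ∃ huv : (extCommGraph S).Adj u v, IsStarLeftPath huv.toWalk :=
  ⟨⟨hp.2.1, hc u v⟩, isStarLeftPath_toWalk _ (hp.2.2 u p.start_mem_support)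
    (hp.2.2 v p.end_mem_support)⟩

theorem starKnitDegree_eq_one_of_isStarLeftPath {S : Type*} [Mul S] {u v : S}
    {p : (extCommGraph S).Walk u v} (hp : IsStarLeftPath p) (hlen : p.length = 1) :
    starKnitDegree S = 1 := by
  have hmem : 1 ∈ {m | ∃ (u v : S) (p : (extCommGraph S).Walk u v),
      IsStarLeftPath p ∧ p.length = m} := ⟨u, v, p, hp, hlen⟩
  refine le_antisymm (Nat.sInf_le hmem) (Nat.one_le_iff_ne_zero.2 ?_)
  rw [starKnitDegree, Ne, Nat.sInf_eq_zero]
  rintro (⟨_, _, q, hq, hlen⟩ | hempty)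
  · exact hq.length_ne_zero hlen
  · exact (Set.nonempty_of_mem hmem).ne_empty hempty

theorem starKnitDegree_eq_one_of_comm_general {S : Type*} [Semigroup S]
    (hc : ∀ x y : S, x * y = y * x) (h : HasStarLeftPath S) :
    starKnitDegree S = 1 := by
  obtain ⟨u, v, p, hp⟩ := h
  obtain ⟨huv, hedge⟩ := hp.exists_isStarLeftPath_toWalk_of_comm hc
  exact starKnitDegree_eq_one_of_isStarLeftPath hedge huv.length_toWalk

theorem starKnitDegree_eq_one_of_comm {S : Type*} [Semigroup S] [Fintype S]
    (hc : ∀ x y : S, x * y = y * x) (h : HasStarLeftPath S) :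
    starKnitDegree S = 1 :=
  starKnitDegree_eq_one_of_comm_general hc h
end

section
/- Let S be a finite non-commutative semigroup whose commuting graph contains left paths. If the extended commuting graph of S contains a *-left path that is not a left path of the commuting graph, then the *-knit degree of S is 1 or 2. -/
open SimpleGraph

/-!
A *-left path `u, …, v` satisfies `u w = v w` at each of its vertices, and that condition only
involves the vertices, not the edges. If one vertex `z` is central, it is adjacent to both ends in
the extended commuting graph, so `u, z, v` (or the edge `u, v` when `z` is an end) is again a
*-left path, of length at most `2`; a *-left path has distinct ends, so its length is never `0`.
-/

section StarLeftPath

variable {S : Type*} [Mul S]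

lemma extCommGraph_adj_of_mem_sgCenter {x z : S} (hz : z ∈ sgCenter S) (hxz : x ≠ z) :
    (extCommGraph S).Adj x z :=
  ⟨hxz, (hz x).symm⟩

lemma IsStarLeftPath.of_support_subset {u v : S} {p q : (extCommGraph S).Walk u v}
    (hp : IsStarLeftPath p) (hq : q.IsPath) (hsub : q.support ⊆ p.support) :
    IsStarLeftPath q :=
  ⟨hq, hp.2.1, fun w hw => hp.2.2 w (hsub hw)⟩

lemma exists_isPath_length_le_two_through_mem_sgCenter {u v z : S} (huv : u ≠ v)
    (hz : z ∈ sgCenter S) :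
    ∃ q : (extCommGraph S).Walk u v, q.IsPath ∧ q.length ≤ 2 ∧ q.support ⊆ [u, z, v] := by
  by_cases hzu : z = u
  · subst hzu
    refine ⟨(extCommGraph_adj_of_mem_sgCenter hz huv.symm).symm.toWalk, ?_, by simp, ?_⟩
    · simp [Walk.isPath_def, huv]
    · simp
  by_cases hzv : z = v
  · subst hzv
    refine ⟨(extCommGraph_adj_of_mem_sgCenter hz huv).toWalk, ?_, by simp, ?_⟩
    · simp [Walk.isPath_def, huv]
    · simp
  refine ⟨.cons (extCommGraph_adj_of_mem_sgCenter hz (Ne.symm hzu))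
    (extCommGraph_adj_of_mem_sgCenter hz (Ne.symm hzv)).symm.toWalk, ?_, by simp, by simp⟩
  simp [Walk.isPath_def, huv, hzv, Ne.symm hzu]

lemma IsStarLeftPath.exists_length_le_two_of_mem_sgCenter {u v z : S}
    {p : (extCommGraph S).Walk u v} (hp : IsStarLeftPath p) (hzp : z ∈ p.support)
    (hz : z ∈ sgCenter S) :
    ∃ q : (extCommGraph S).Walk u v, IsStarLeftPath q ∧ q.length ≤ 2 := by
  obtain ⟨q, hq, hlen, hsub⟩ := exists_isPath_length_le_two_through_mem_sgCenter hp.2.1 hz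
  refine ⟨q, hp.of_support_subset hq fun w hw => ?_, hlen⟩
  obtain rfl | rfl | rfl : w = u ∨ w = z ∨ w = v := by simpa using hsub hw
  exacts [p.start_mem_support, hzp, p.end_mem_support]

lemma starKnitDegree_le_length {u v : S} {p : (extCommGraph S).Walk u v}
    (hp : IsStarLeftPath p) : starKnitDegree S ≤ p.length :=
  Nat.sInf_le ⟨u, v, p, hp, rfl⟩

lemma starKnitDegree_ne_zero (h : HasStarLeftPath S) : starKnitDegree S ≠ 0 := by
  obtain ⟨u, v, p, hp⟩ := h
  obtain ⟨a, b, q, ⟨-, hab, -⟩, hlen⟩ :=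
    Nat.sInf_mem (s := {m | ∃ (u v : S) (p : (extCommGraph S).Walk u v),
      IsStarLeftPath p ∧ p.length = m}) ⟨_, u, v, p, hp, rfl⟩
  intro h0
  exact hab (q.eq_of_length_eq_zero (hlen.trans h0))

end StarLeftPath

theorem starKnitDegree_one_or_two_general {S : Type*} [Semigroup S]
    (h : ∃ (u v : S) (p : (extCommGraph S).Walk u v),
      IsStarLeftPath p ∧ ∃ w ∈ p.support, w ∈ sgCenter S) :
    starKnitDegree S = 1 ∨ starKnitDegree S = 2 := by
  obtain ⟨u, v, p, hp, z, hzp, hz⟩ := h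
  obtain ⟨q, hq, hlen⟩ := hp.exists_length_le_two_of_mem_sgCenter hzp hz
  have hle : starKnitDegree S ≤ 2 := (starKnitDegree_le_length hq).trans hlen
  have hne : starKnitDegree S ≠ 0 := starKnitDegree_ne_zero ⟨u, v, q, hq⟩
  omega

theorem starKnitDegree_one_or_two {S : Type*} [Semigroup S] [Fintype S]
    (hnc : ¬ ∀ x y : S, x * y = y * x) (hlp : HasLeftPath S)
    (h : ∃ (u v : S) (p : (extCommGraph S).Walk u v),
      IsStarLeftPath p ∧ ∃ w ∈ p.support, w ∈ sgCenter S) :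
    starKnitDegree S = 1 ∨ starKnitDegree S = 2 :=
  starKnitDegree_one_or_two_general h
end

section
/- Let S be the zero-union of finite semigroups S₁, …, Sₙ with at least two of them non-commutative. Then the clique number of the commuting graph of S equals the sum of the clique numbers of the commuting graphs of the non-commutative Sᵢ. -/
open SimpleGraph

/-!
Distinct components annihilate each other and the adjoined zero is central, so the non-central
elements of the zero-union are exactly the non-central elements of the components, and its
commuting graph is the join of the components' commuting graphs. A clique of a join is a disjoint
union of cliques of the parts, so clique numbers add; commutative components have no vertices.
-/

open scoped Finset

namespace SimpleGraph

variable {α β : Type*} {G : SimpleGraph α} {H : SimpleGraph β}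

lemma Embedding.cliqueNum_le [Finite β] (f : G ↪g H) : G.cliqueNum ≤ H.cliqueNum := by
  obtain ⟨s, hs⟩ := G.exists_isNClique_cliqueNum
  have hclique : H.IsClique (s.map f.toEmbedding) := by
    intro x hx y hy hxy
    obtain ⟨a, -, rfl⟩ := Finset.mem_map.mp hx
    obtain ⟨b, -, rfl⟩ := Finset.mem_map.mp hy
    exact f.map_rel_iff.mpr (hs.isClique (by simpa using hx) (by simpa using hy)
      (fun h => hxy (congrArg _ h)))
  calc G.cliqueNum = #(s.map f.toEmbedding) := by rw [Finset.card_map, hs.card_eq]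
    _ ≤ H.cliqueNum := hclique.card_le_cliqueNum

lemma Iso.cliqueNum_eq [Finite α] [Finite β] (e : G ≃g H) : G.cliqueNum = H.cliqueNum :=
  le_antisymm e.toEmbedding.cliqueNum_le e.symm.toEmbedding.cliqueNum_le

lemma cliqueNum_eq_zero_of_isEmpty [IsEmpty α] (G : SimpleGraph α) : G.cliqueNum = 0 := by
  obtain ⟨s, hs⟩ := G.exists_isNClique_cliqueNum
  rw [← hs.card_eq, Finset.eq_empty_of_isEmpty s, Finset.card_empty]

section GraphJoinFam

variable {ι : Type*} {V : ι → Type*} {G : ∀ i, SimpleGraph (V i)}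

lemma graphJoinFam_adj_of_fst_ne {x y : Σ i, V i} (h : x.1 ≠ y.1) : (graphJoinFam G).Adj x y :=
  Or.inl h

lemma graphJoinFam_adj_mk_mk {i : ι} {a b : V i} :
    (graphJoinFam G).Adj ⟨i, a⟩ ⟨i, b⟩ ↔ (G i).Adj a b := by
  refine ⟨?_, fun h => Or.inr ⟨a, b, h, rfl, rfl⟩⟩
  rintro (h | ⟨a', b', hadj, ha, hb⟩)
  · exact absurd rfl h
  · rwa [sigma_mk_injective ha, sigma_mk_injective hb]

lemma isClique_graphJoinFam_sigma {t : Finset ι} {s : ∀ i, Finset (V i)}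
    (hs : ∀ i, (G i).IsClique (s i)) :
    (graphJoinFam G).IsClique (t.sigma s : Set (Σ i, V i)) := by
  rintro ⟨i, a⟩ hx ⟨j, b⟩ hy hxy
  obtain rfl | hij := eq_or_ne i j
  · exact graphJoinFam_adj_mk_mk.mpr ((hs i) (Finset.mem_sigma.mp hx).2 (Finset.mem_sigma.mp hy).2
      (sigma_mk_injective.ne_iff.mp hxy))
  · exact graphJoinFam_adj_of_fst_ne hij

lemma IsClique.preimage_sigmaMk {s : Finset (Σ i, V i)}
    (hs : (graphJoinFam G).IsClique (s : Set _)) (i : ι) :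
    (G i).IsClique (s.preimage (Sigma.mk i) sigma_mk_injective.injOn : Set (V i)) := by
  intro a ha b hb hab
  exact graphJoinFam_adj_mk_mk.mp (hs (by simpa using ha) (by simpa using hb) (by simpa using hab))

lemma cliqueNum_graphJoinFam [Fintype ι] [∀ i, Finite (V i)] :
    (graphJoinFam G).cliqueNum = ∑ i, (G i).cliqueNum := by
  classical
  refine le_antisymm ?_ ?_
  · obtain ⟨s, hs⟩ := (graphJoinFam G).exists_isNClique_cliqueNum
    set fiber := fun i => s.preimage (Sigma.mk i) sigma_mk_injective.injOn
    have hs_eq : Finset.univ.sigma fiber = s :=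
      s.sigma_preimage_mk_of_subset (Finset.subset_univ _)
    calc (graphJoinFam G).cliqueNum = ∑ i, #(fiber i) := by
          rw [← hs.card_eq, ← hs_eq, Finset.card_sigma]
      _ ≤ ∑ i, (G i).cliqueNum :=
          Finset.sum_le_sum fun i _ => (hs.isClique.preimage_sigmaMk i).card_le_cliqueNum
  · choose t ht using fun i => (G i).exists_isNClique_cliqueNum
    calc ∑ i, (G i).cliqueNum = #(Finset.univ.sigma t) := by
          rw [Finset.card_sigma]; exact Finset.sum_congr rfl fun i _ => (ht i).card_eq.symm
      _ ≤ (graphJoinFam G).cliqueNum :=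
          (isClique_graphJoinFam_sigma fun i => (ht i).isClique).card_le_cliqueNum

end GraphJoinFam

end SimpleGraph

lemma cliqueNum_commGraph_of_forall_mul_comm {M : Type*} [Mul M] (h : ∀ x y : M, x * y = y * x) :
    (commGraph M).cliqueNum = 0 :=
  have : IsEmpty {x : M // x ∉ sgCenter M} := ⟨fun x => x.2 (h x.1)⟩
  SimpleGraph.cliqueNum_eq_zero_of_isEmpty _

namespace ZeroUnion

variable {n : ℕ} {S : Fin n → Type*}

instance [∀ i, Finite (S i)] : Finite (ZeroUnion S) := inferInstanceAs (Finite (Option _))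

def of (i : Fin n) (a : S i) : ZeroUnion S := some ⟨i, a⟩

lemma of_injective (i : Fin n) : Function.Injective (of (S := S) i) :=
  fun _ _ h => sigma_mk_injective (Option.some_injective _ h)

lemma of_ne_of {i j : Fin n} (h : i ≠ j) (a : S i) (b : S j) : of i a ≠ of j b :=
  fun hab => h (congrArg Sigma.fst (Option.some_injective _ hab))

instance : Zero (ZeroUnion S) := ⟨none⟩

lemma eq_zero_or_exists_eq_of (x : ZeroUnion S) : x = 0 ∨ ∃ i a, x = of i a := by
  rcases x with _ | ⟨i, a⟩
  exacts [Or.inl rfl, Or.inr ⟨i, a, rfl⟩]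

variable [∀ i, Mul (S i)]

instance : MulZeroClass (ZeroUnion S) where
  zero_mul _ := rfl
  mul_zero x := by rcases x with _ | _ <;> rfl

lemma of_mul_of (i : Fin n) (a b : S i) : of i a * of i b = of i (a * b) :=
  dif_pos rfl

lemma of_mul_of_of_ne {i j : Fin n} (h : i ≠ j) (a : S i) (b : S j) :
    of i a * of j b = 0 :=
  dif_neg h.symm

lemma zero_mem_sgCenter : (0 : ZeroUnion S) ∈ sgCenter (ZeroUnion S) := by
  intro y
  rw [zero_mul, mul_zero]

lemma commute_of_of_iff (i : Fin n) (a b : S i) : Commute (of i a) (of i b) ↔ Commute a b := by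
  rw [commute_iff_eq, commute_iff_eq, of_mul_of, of_mul_of, (of_injective i).eq_iff]

lemma of_mem_sgCenter_iff (i : Fin n) (a : S i) :
    of i a ∈ sgCenter (ZeroUnion S) ↔ a ∈ sgCenter (S i) := by
  refine ⟨fun h b => (commute_of_of_iff i a b).mp (h (of i b)), fun h y => ?_⟩
  rcases eq_zero_or_exists_eq_of y with rfl | ⟨j, b, rfl⟩
  · rw [zero_mul, mul_zero]
  · obtain rfl | hij := eq_or_ne i j
    · exact (commute_of_of_iff i a b).mpr (h b)
    · rw [of_mul_of_of_ne hij, of_mul_of_of_ne hij.symm]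

def ofNonCentral (x : Σ i, {a : S i // a ∉ sgCenter (S i)}) :
    {y : ZeroUnion S // y ∉ sgCenter (ZeroUnion S)} :=
  ⟨of x.1 x.2, (of_mem_sgCenter_iff x.1 x.2.1).not.mpr x.2.2⟩

lemma ofNonCentral_injective : Function.Injective (ofNonCentral (S := S)) := by
  rintro ⟨i, a⟩ ⟨j, b⟩ h
  obtain rfl | hij := eq_or_ne i j
  · exact congrArg (Sigma.mk i) (Subtype.val_injective (of_injective i (congrArg Subtype.val h)))
  · exact absurd (congrArg Subtype.val h) (of_ne_of hij a.1 b.1)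

lemma ofNonCentral_surjective : Function.Surjective (ofNonCentral (S := S)) := by
  rintro ⟨y, hy⟩
  rcases eq_zero_or_exists_eq_of y with rfl | ⟨i, a, rfl⟩
  · exact absurd zero_mem_sgCenter hy
  · exact ⟨⟨i, a, (of_mem_sgCenter_iff i a).not.mp hy⟩, rfl⟩

noncomputable def commGraphIso :
    graphJoinFam (fun i => commGraph (S i)) ≃g commGraph (ZeroUnion S) where
  toEquiv := Equiv.ofBijective ofNonCentral ⟨ofNonCentral_injective, ofNonCentral_surjective⟩
  map_rel_iff' := by
    rintro ⟨i, a⟩ ⟨j, b⟩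
    obtain rfl | hij := eq_or_ne i j
    · rw [SimpleGraph.graphJoinFam_adj_mk_mk]
      exact and_congr (ofNonCentral_injective.ne_iff.trans sigma_mk_injective.ne_iff)
        (commute_of_of_iff i a.1 b.1)
    · refine iff_of_true ⟨ofNonCentral_injective.ne (by simp [hij]), ?_⟩
        (SimpleGraph.graphJoinFam_adj_of_fst_ne hij)
      exact (of_mul_of_of_ne hij a.1 b.1).trans (of_mul_of_of_ne hij.symm b.1 a.1).symm

end ZeroUnion

theorem cliqueNum_commGraph_zeroUnion_general {n : ℕ} (S : Fin n → Type*)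
    [∀ i, Semigroup (S i)] [∀ i, Fintype (S i)]
    (NC : Finset (Fin n)) (hNC : ∀ i, i ∈ NC ↔ ¬ ∀ x y : S i, x * y = y * x) :
    (commGraph (ZeroUnion S)).cliqueNum =
      ∑ i ∈ NC, (commGraph (S i)).cliqueNum := by
  rw [← ZeroUnion.commGraphIso.cliqueNum_eq, SimpleGraph.cliqueNum_graphJoinFam]
  refine (Finset.sum_subset (Finset.subset_univ NC) fun i _ hi => ?_).symm
  exact cliqueNum_commGraph_of_forall_mul_comm (not_not.mp ((hNC i).not.mp hi))

theorem cliqueNum_commGraph_zeroUnion {n : ℕ} (S : Fin n → Type*)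
    [∀ i, Semigroup (S i)] [∀ i, Fintype (S i)] [∀ i, Nonempty (S i)]
    (NC : Finset (Fin n)) (hNC : ∀ i, i ∈ NC ↔ ¬ ∀ x y : S i, x * y = y * x)
    (h2 : 2 ≤ NC.card) :
    (commGraph (ZeroUnion S)).cliqueNum =
      ∑ i ∈ NC, (commGraph (S i)).cliqueNum :=
  cliqueNum_commGraph_zeroUnion_general S NC hNC
end

section
/- Let S = S₁ × ⋯ × Sₙ be a direct product of finite semigroups, with C the set of indices of commutative factors and NC the set of indices of non-commutative factors, and suppose NC ≠ ∅. Then ω(G(S)) = (∏_{i∈C} |Sᵢ|) · (∏_{i∈NC} (|Z(Sᵢ)| + ω(G(Sᵢ)))) − ∏_{i=1}^n |Z(Sᵢ)|. -/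
open SimpleGraph

/-!
A set of pairwise commuting elements of `T` is a clique of `extCommGraph T`; a largest one is
the centre together with a largest clique of `commGraph T`, so
`ω(extCommGraph T) = |Z(T)| + ω(G(T))`, and `ω(extCommGraph T) = |T|` when `T` is commutative.
The extended commuting graph of a direct product is the strong product of those of the factors,
and clique numbers of strong products multiply: a clique projects onto cliques of the factors and
lies in the product of its projections. As the centre of a product is the product of the centres,
`ω(G(∏ Sᵢ)) = ∏ ω(extCommGraph Sᵢ) - ∏ |Z(Sᵢ)|`.
-/

open Finset

lemma mem_sgCenter_pi_iff {ι : Type*} {S : ι → Type*} [∀ i, Mul (S i)] {x : ∀ i, S i} :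
    x ∈ sgCenter (∀ i, S i) ↔ ∀ i, x i ∈ sgCenter (S i) := by
  classical
  refine ⟨fun hx i b => ?_, fun hx y => funext fun i => hx i (y i)⟩
  simpa using congrFun (hx (Function.update x i b)) i

lemma card_sgCenter_pi {ι : Type*} [Fintype ι] {S : ι → Type*} [∀ i, Mul (S i)] :
    Nat.card (sgCenter (∀ i, S i)) = ∏ i, Nat.card (sgCenter (S i)) := by
  rw [← Nat.card_pi]
  exact Nat.card_congr
    ((Equiv.subtypeEquivRight fun _ => mem_sgCenter_pi_iff).trans Equiv.subtypePiEquivPi)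

lemma isClique_extCommGraph_iff {T : Type*} [Mul T] {s : Set T} :
    (extCommGraph T).IsClique s ↔ ∀ x ∈ s, ∀ y ∈ s, x * y = y * x := by
  refine ⟨fun hs x hx y hy => ?_, fun hs x hx y hy hxy => ⟨hxy, hs x hx y hy⟩⟩
  obtain rfl | hxy := eq_or_ne x y
  · rfl
  · exact (hs hx hy hxy).2

lemma cliqueNum_extCommGraph_of_comm {T : Type*} [Mul T] [Fintype T]
    (hT : ∀ x y : T, x * y = y * x) : (extCommGraph T).cliqueNum = Fintype.card T := by
  obtain ⟨s, hs⟩ := (extCommGraph T).exists_isNClique_cliqueNum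
  refine le_antisymm (hs.card_eq ▸ card_le_univ s) ?_
  exact (isClique_extCommGraph_iff.2 fun x _ y _ => hT x y).card_le_cliqueNum (t := univ)

theorem cliqueNum_extCommGraph (T : Type*) [Mul T] [Finite T] :
    (extCommGraph T).cliqueNum = Nat.card (sgCenter T) + (commGraph T).cliqueNum := by
  classical
  have := Fintype.ofFinite T
  apply le_antisymm
  · obtain ⟨s, hs⟩ := (extCommGraph T).exists_isNClique_cliqueNum
    have hcomm := isClique_extCommGraph_iff.1 hs.isClique
    have hnoncentral : (commGraph T).IsClique (s.subtype (· ∉ sgCenter T) : Set _) :=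
      fun x hx y hy hxy => ⟨hxy, hcomm x (mem_subtype.1 hx) y (mem_subtype.1 hy)⟩
    rw [← hs.card_eq, ← card_filter_add_card_filter_not (· ∈ sgCenter T)]
    gcongr
    · rw [Nat.card_eq_card_toFinset]
      exact card_le_card fun x hx => Set.mem_toFinset.2 (mem_filter.1 hx).2
    · exact card_subtype (· ∉ sgCenter T) s ▸ hnoncentral.card_le_cliqueNum
  · obtain ⟨K, hK⟩ := (commGraph T).exists_isNClique_cliqueNum
    have hdisj : Disjoint (sgCenter T).toFinset (K.map (Function.Embedding.subtype _)) :=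
      disjoint_left.2 fun x hx hxK => by
        obtain ⟨y, -, rfl⟩ := mem_map.1 hxK
        exact y.2 (Set.mem_toFinset.1 hx)
    have hclique : (extCommGraph T).IsClique
        (((sgCenter T).toFinset ∪ K.map (Function.Embedding.subtype _) : Finset T) : Set T) := by
      refine isClique_extCommGraph_iff.2 fun x hx y hy => ?_
      simp only [coe_union, Set.coe_toFinset, coe_map, Set.mem_union, Set.mem_image,
        Function.Embedding.coe_subtype, mem_coe] at hx hy
      obtain hx | ⟨x, hx, rfl⟩ := hx
      · exact hx y
      obtain hy | ⟨y, hy, rfl⟩ := hy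
      · exact (hy x).symm
      obtain rfl | hxy := eq_or_ne x y
      · rfl
      · exact (hK.isClique hx hy hxy).2
    have := hclique.card_le_cliqueNum
    rwa [card_union_of_disjoint hdisj, card_map, hK.card_eq, ← Nat.card_eq_card_toFinset] at this

lemma extCommGraph_pi {ι : Type*} {S : ι → Type*} [∀ i, Mul (S i)] :
    extCommGraph (∀ i, S i) = strongProdFam fun i => extCommGraph (S i) := by
  ext x y
  simp only [extCommGraph, strongProdFam, funext_iff, Pi.mul_apply]
  refine and_congr_right fun _ => forall_congr' fun i => ?_
  by_cases h : x i = y i <;> simp [h]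

namespace SimpleGraph

variable {ι : Type*} {V : ι → Type*} {G : ∀ i, SimpleGraph (V i)}

lemma isClique_strongProdFam_piFinset [DecidableEq ι] [Fintype ι] {s : ∀ i, Finset (V i)}
    (hs : ∀ i, (G i).IsClique (s i : Set (V i))) :
    (strongProdFam G).IsClique (Fintype.piFinset s : Set (∀ i, V i)) := by
  intro x hx y hy hxy
  simp only [mem_coe, Fintype.mem_piFinset] at hx hy
  exact ⟨hxy, fun i => (eq_or_ne (x i) (y i)).imp_right (hs i (hx i) (hy i))⟩

lemma IsClique.image_eval_strongProdFam [∀ i, DecidableEq (V i)] {s : Finset (∀ i, V i)}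
    (hs : (strongProdFam G).IsClique (s : Set (∀ i, V i))) (i : ι) :
    (G i).IsClique (s.image (· i) : Set (V i)) := by
  intro a ha b hb hab
  simp only [coe_image, Set.mem_image, mem_coe] at ha hb
  obtain ⟨x, hx, rfl⟩ := ha
  obtain ⟨y, hy, rfl⟩ := hb
  exact ((hs hx hy fun h => hab (h ▸ rfl)).2 i).resolve_left hab

theorem cliqueNum_strongProdFam [Fintype ι] [∀ i, Finite (V i)] :
    (strongProdFam G).cliqueNum = ∏ i, (G i).cliqueNum := by
  classical
  apply le_antisymm
  · obtain ⟨s, hs⟩ := (strongProdFam G).exists_isNClique_cliqueNum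
    calc (strongProdFam G).cliqueNum = #s := hs.card_eq.symm
      _ ≤ #(Fintype.piFinset fun i => s.image (· i)) :=
        card_le_card fun x hx => Fintype.mem_piFinset.2 fun i => mem_image_of_mem _ hx
      _ = ∏ i, #(s.image (· i)) := Fintype.card_piFinset _
      _ ≤ ∏ i, (G i).cliqueNum := prod_le_prod' fun i _ =>
        (hs.isClique.image_eval_strongProdFam i).card_le_cliqueNum
  · choose K hK using fun i => (G i).exists_isNClique_cliqueNum
    calc ∏ i, (G i).cliqueNum = #(Fintype.piFinset K) := by
          simp only [Fintype.card_piFinset, fun i => (hK i).card_eq]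
      _ ≤ (strongProdFam G).cliqueNum :=
        (isClique_strongProdFam_piFinset fun i => (hK i).isClique).card_le_cliqueNum

end SimpleGraph

theorem cliqueNum_commGraph_pi_general {n : ℕ} (S : Fin n → Type*)
    [∀ i, Semigroup (S i)] [∀ i, Fintype (S i)]
    (C NC : Finset (Fin n))
    (hC : ∀ i, i ∈ C ↔ ∀ x y : S i, x * y = y * x)
    (hNC : ∀ i, i ∈ NC ↔ ¬ ∀ x y : S i, x * y = y * x) :
    (commGraph (∀ i, S i)).cliqueNum =
      (∏ i ∈ C, Fintype.card (S i)) *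
        (∏ i ∈ NC, (Nat.card (sgCenter (S i)) + (commGraph (S i)).cliqueNum)) -
      ∏ i : Fin n, Nat.card (sgCenter (S i)) := by
  have hNC_eq : NC = Cᶜ := by
    ext i
    rw [mem_compl, hC i, hNC i]
  have hcommuting : (extCommGraph (∀ i, S i)).cliqueNum = (∏ i ∈ C, Fintype.card (S i)) *
      ∏ i ∈ NC, (Nat.card (sgCenter (S i)) + (commGraph (S i)).cliqueNum) := by
    rw [extCommGraph_pi, cliqueNum_strongProdFam, hNC_eq, ← prod_mul_prod_compl C]
    congr 1
    · exact prod_congr rfl fun i hi => cliqueNum_extCommGraph_of_comm ((hC i).1 hi)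
    · exact prod_congr rfl fun i _ => cliqueNum_extCommGraph (S i)
  rw [← hcommuting, cliqueNum_extCommGraph, card_sgCenter_pi, add_tsub_cancel_left]

theorem cliqueNum_commGraph_pi {n : ℕ} (S : Fin n → Type*)
    [∀ i, Semigroup (S i)] [∀ i, Fintype (S i)] [∀ i, Nonempty (S i)]
    (C NC : Finset (Fin n))
    (hC : ∀ i, i ∈ C ↔ ∀ x y : S i, x * y = y * x)
    (hNC : ∀ i, i ∈ NC ↔ ¬ ∀ x y : S i, x * y = y * x)
    (h : NC.Nonempty) :
    (commGraph (∀ i, S i)).cliqueNum =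
      (∏ i ∈ C, Fintype.card (S i)) *
        (∏ i ∈ NC, (Nat.card (sgCenter (S i)) + (commGraph (S i)).cliqueNum)) -
      ∏ i : Fin n, Nat.card (sgCenter (S i)) :=
  cliqueNum_commGraph_pi_general S C NC hC hNC
end

section
/- Let S = S₁ × ⋯ × Sₙ be a direct product of finite semigroups, with C the indices of commutative factors and NC ≠ ∅ the indices of non-commutative factors. Then χ(G(S)) ≤ (∏_{i∈C} |Sᵢ|) · (∏_{i∈NC} (|Z(Sᵢ)| + χ(G(Sᵢ)))) − ∏_{i=1}^n |Z(Sᵢ)|. -/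
open SimpleGraph

/-!
Colour `x` in the product coordinatewise: the `i`-th coordinate records `x i` itself when it is
central in `S i`, and otherwise its colour in an optimal colouring of `G(S i)`. Two distinct
commuting elements differ in some coordinate, where they still commute, so they get different
colours. A non-central element is non-central in some coordinate, so the `∏ |Z(S i)|` all-central
colour patterns are never used. For a commutative factor, `|Z(S i)| + χ(G(S i)) = |S i| + 0`.
-/

lemma mem_sgCenter_pi {ι : Type*} {S : ι → Type*} [∀ i, Mul (S i)] {x : ∀ i, S i}
    (hx : ∀ i, x i ∈ sgCenter (S i)) : x ∈ sgCenter (∀ i, S i) :=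
  fun y => funext fun i => hx i (y i)

section Commutative

variable {S : Type*} [Mul S]

lemma sgCenter_eq_univ (hS : ∀ x y : S, x * y = y * x) : sgCenter S = Set.univ :=
  Set.eq_univ_of_forall hS

lemma chromaticNumber_commGraph_eq_zero (hS : ∀ x y : S, x * y = y * x) :
    (commGraph S).chromaticNumber = 0 :=
  have : IsEmpty {x : S // x ∉ sgCenter S} := ⟨fun x => x.2 (hS x.1)⟩
  chromaticNumber_eq_zero_of_isEmpty

lemma card_sgCenter_add_chromaticNumber_commGraph [Fintype S]
    (hS : ∀ x y : S, x * y = y * x) :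
    (Nat.card (sgCenter S) : ℕ∞) + (commGraph S).chromaticNumber = Fintype.card S := by
  rw [chromaticNumber_commGraph_eq_zero hS, add_zero, sgCenter_eq_univ hS, Nat.card_univ,
    Nat.card_eq_fintype_card]

end Commutative

section CenterOrColor

variable {S : Type*} [Mul S] {α : Type*} (c : (commGraph S).Coloring α)

open Classical in
noncomputable def centerOrColor (x : S) : sgCenter S ⊕ α :=
  if h : x ∈ sgCenter S then .inl ⟨x, h⟩ else .inr (c ⟨x, h⟩)

lemma centerOrColor_eq_inl_iff {x : S} {z : sgCenter S} :
    centerOrColor c x = .inl z ↔ x = z := by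
  unfold centerOrColor
  split_ifs with hx
  · rw [Sum.inl_injective.eq_iff, Subtype.ext_iff]
  · exact iff_of_false (by simp) fun hxz => hx (hxz ▸ z.2)

lemma eq_of_centerOrColor_eq {x y : S} (hxy : x * y = y * x)
    (h : centerOrColor c x = centerOrColor c y) : x = y := by
  unfold centerOrColor at h
  split_ifs at h with hx hy hy
  · exact congrArg Subtype.val (Sum.inl_injective h)
  · by_contra hne
    exact c.valid ⟨fun he => hne (congrArg Subtype.val he), hxy⟩ (Sum.inr_injective h)

end CenterOrColor

def centralPatterns {ι : Type*} (S : ι → Type*) [∀ i, Mul (S i)] (α : ι → Type*) :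
    Set (∀ i, sgCenter (S i) ⊕ α i) :=
  Set.range fun (z : ∀ i, sgCenter (S i)) i => .inl (z i)

noncomputable def piCenterOrColor {ι : Type*} {S : ι → Type*} [∀ i, Mul (S i)] {α : ι → Type*}
    (c : ∀ i, (commGraph (S i)).Coloring (α i)) :
    (commGraph (∀ i, S i)).Coloring ↥(centralPatterns S α)ᶜ :=
  Coloring.mk
    (fun x => ⟨fun i => centerOrColor (c i) (x.1 i), by
      rintro ⟨z, hz⟩
      refine x.2 (mem_sgCenter_pi fun i => ?_)
      rw [(centerOrColor_eq_inl_iff (c i)).1 (congrFun hz i).symm]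
      exact (z i).2⟩)
    (by
      rintro x y ⟨hne, hxy⟩ heq
      exact hne (Subtype.ext (funext fun i => eq_of_centerOrColor_eq (c i) (congrFun hxy i)
        (congrFun (congrArg Subtype.val heq) i))))

lemma Set.ncard_compl_range_pi_inl {ι : Type*} [Fintype ι] {A B : ι → Type*}
    [∀ i, Finite (A i)] [∀ i, Finite (B i)] :
    (Set.range fun (a : ∀ i, A i) i => (Sum.inl (a i) : A i ⊕ B i))ᶜ.ncard =
      ∏ i, (Nat.card (A i) + Nat.card (B i)) - ∏ i, Nat.card (A i) := by
  have hinj : Function.Injective fun (a : ∀ i, A i) i => (Sum.inl (a i) : A i ⊕ B i) :=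
    fun a b h => funext fun i => Sum.inl_injective (congrFun h i)
  rw [Set.ncard_compl, Set.ncard_range_of_injective hinj, Nat.card_pi, Nat.card_pi]
  simp only [Nat.card_sum]

lemma SimpleGraph.Coloring.chromaticNumber_le_natCard {V α : Type*} {G : SimpleGraph V}
    [Finite α] (c : G.Coloring α) : G.chromaticNumber ≤ Nat.card α := by
  have := Fintype.ofFinite α
  rw [Nat.card_eq_fintype_card]
  exact c.colorable.chromaticNumber_le

theorem chromaticNumber_commGraph_pi_le_prod_sub {ι : Type*} [Fintype ι] (S : ι → Type*)
    [∀ i, Mul (S i)] [∀ i, Finite (S i)] :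
    (commGraph (∀ i, S i)).chromaticNumber ≤
      ∏ i, ((Nat.card (sgCenter (S i)) : ℕ∞) + (commGraph (S i)).chromaticNumber) -
        ∏ i, (Nat.card (sgCenter (S i)) : ℕ∞) := by
  have hχ i :
      ((commGraph (S i)).chromaticNumber.toNat : ℕ∞) = (commGraph (S i)).chromaticNumber :=
    ENat.natCast_toNat <|
      chromaticNumber_ne_top_iff_exists.2 ⟨_, colorable_chromaticNumber_of_fintype _⟩
  let c i := (colorable_chromaticNumber_of_fintype (commGraph (S i))).some
  calc (commGraph (∀ i, S i)).chromaticNumber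
      ≤ Nat.card ↥(centralPatterns S fun i => Fin (commGraph (S i)).chromaticNumber.toNat)ᶜ :=
        (piCenterOrColor c).chromaticNumber_le_natCard
    _ = _ := by
        rw [Nat.card_coe_set_eq, centralPatterns, Set.ncard_compl_range_pi_inl, ENat.natCast_sub]
        simp only [Nat.cast_prod, Nat.cast_add, Nat.card_fin, hχ]

theorem chromaticNumber_commGraph_pi_le_general {n : ℕ} (S : Fin n → Type*)
    [∀ i, Semigroup (S i)] [∀ i, Fintype (S i)]
    (C NC : Finset (Fin n))
    (hC : ∀ i, i ∈ C ↔ ∀ x y : S i, x * y = y * x)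
    (hNC : ∀ i, i ∈ NC ↔ ¬ ∀ x y : S i, x * y = y * x) :
    (commGraph (∀ i, S i)).chromaticNumber ≤
      (∏ i ∈ C, (Fintype.card (S i) : ℕ∞)) *
        (∏ i ∈ NC, ((Nat.card (sgCenter (S i)) : ℕ∞) +
          (commGraph (S i)).chromaticNumber)) -
      ∏ i : Fin n, (Nat.card (sgCenter (S i)) : ℕ∞) := by
  have hNC_eq : NC = Cᶜ := by
    ext i
    simp [hNC i, hC i]
  have hC_prod : ∏ i ∈ C, (Fintype.card (S i) : ℕ∞) =
      ∏ i ∈ C, ((Nat.card (sgCenter (S i)) : ℕ∞) + (commGraph (S i)).chromaticNumber) :=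
    Finset.prod_congr rfl fun i hi =>
      (card_sgCenter_add_chromaticNumber_commGraph ((hC i).1 hi)).symm
  rw [hC_prod, hNC_eq, Finset.prod_mul_prod_compl]
  exact chromaticNumber_commGraph_pi_le_prod_sub S

theorem chromaticNumber_commGraph_pi_le {n : ℕ} (S : Fin n → Type*)
    [∀ i, Semigroup (S i)] [∀ i, Fintype (S i)] [∀ i, Nonempty (S i)]
    (C NC : Finset (Fin n))
    (hC : ∀ i, i ∈ C ↔ ∀ x y : S i, x * y = y * x)
    (hNC : ∀ i, i ∈ NC ↔ ¬ ∀ x y : S i, x * y = y * x)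
    (h : NC.Nonempty) :
    (commGraph (∀ i, S i)).chromaticNumber ≤
      (∏ i ∈ C, (Fintype.card (S i) : ℕ∞)) *
        (∏ i ∈ NC, ((Nat.card (sgCenter (S i)) : ℕ∞) +
          (commGraph (S i)).chromaticNumber)) -
      ∏ i : Fin n, (Nat.card (sgCenter (S i)) : ℕ∞) :=
  chromaticNumber_commGraph_pi_le_general S C NC hC hNC
end
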